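/- Let T be a binary tree of size n and define the mirror Tamari polynomial B̃_T ∈ ℤ[x] by B̃_∅ = 1 and, for T = x(L,R), (x−1)·B̃_T(x) = x·B̃_R(x)·(x·B̃_L(x) − B̃_L(1)). Then for every k ≥ 0 the coefficient of x^k in B̃_T equals the number of binary trees T' of size n with T ≤ T' in the Tamari order whose right border has exactly k nodes; in particular B̃_T(1) is the number of trees greater than or equal to T. -/

import Mathlib

open Polynomial

/-- A binary tree: either the empty tree or a pair of binary trees
(left and right subtrees) grafted on an internal node. -/
inductive BinTree : Type
  | leaf : BinTree
  | node : BinTree → BinTree → BinTree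

namespace BinTree

/-- The size of a binary tree: its number of internal nodes. -/
def size : BinTree → ℕ
  | leaf => 0
  | node l r => l.size + r.size + 1

/-- One right rotation somewhere in the tree: `Rot T T'` means that `T'` is obtained
from `T` by replacing one subtree of the form `y(x(A,B),C)` by `x(A,y(B,C))`. -/
inductive Rot : BinTree → BinTree → Prop
  | root (A B C : BinTree) : Rot (node (node A B) C) (node A (node B C))
  | left {L L' : BinTree} (R : BinTree) : Rot L L' → Rot (node L R) (node L' R)
  | right (L : BinTree) {R R' : BinTree} : Rot R R' → Rot (node L R) (node L R')

/-- The Tamari order: `TamariLE T T'` iff `T'` is obtained from `T` by a (possibly empty)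
sequence of right rotations. -/
def TamariLE (T T' : BinTree) : Prop := Relation.ReflTransGen Rot T T'

/-- The Tamari polynomial `B_T ∈ ℤ[x]`: `B_∅ = 1` and for `T = x(L,R)`, `B_T` is the
unique polynomial with `(x-1)·B_T = x·B_L·(x·B_R - B_R(1))` (exact division by the
monic polynomial `X - 1`, the right-hand side vanishing at `x = 1`). -/
noncomputable def tamPoly : BinTree → Polynomial ℤ
  | leaf => 1
  | node l r =>
      (X * tamPoly l * (X * tamPoly r - C ((tamPoly r).eval 1))) /ₘ (X - C 1)

/-- The mirror Tamari polynomial, obtained by exchanging the roles of the left and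
right subtrees in the recursive definition of the Tamari polynomial. -/
noncomputable def tamPolyMirror : BinTree → Polynomial ℤ
  | leaf => 1
  | node l r =>
      (X * tamPolyMirror r * (X * tamPolyMirror l - C ((tamPolyMirror l).eval 1))) /ₘ (X - C 1)

/-- The number of nodes on the left border of a binary tree. -/
def leftBorder : BinTree → ℕ
  | leaf => 0
  | node l _ => l.leftBorder + 1

/-- The number of nodes on the right border of a binary tree. -/
def rightBorder : BinTree → ℕ
  | leaf => 0
  | node _ r => r.rightBorder + 1

/-- `inSub T a b`: in the unique binary-search-tree labelling of `T` by `1,…,size T`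
(all labels of the left subtree of a node are smaller than its label, all labels of its
right subtree are larger), the node labelled `a` belongs to the subtree rooted at the
node labelled `b` (in particular `inSub T a a` holds for every node label `a`). -/
def inSub : BinTree → ℕ → ℕ → Prop
  | leaf => fun _ _ => False
  | node l r => fun a b =>
      (b = l.size + 1 ∧ 1 ≤ a ∧ a ≤ l.size + r.size + 1) ∨
      inSub l a b ∨
      (l.size + 1 < a ∧ l.size + 1 < b ∧ inSub r (a - (l.size + 1)) (b - (l.size + 1)))

/-- The binary search tree poset of `T`: `bstRel T a b` iff `a ≺_T b`, i.e. `a ≠ b` and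
the node labelled `a` is in the subtree rooted at the node labelled `b`. -/
def bstRel (T : BinTree) (a b : ℕ) : Prop := a ≠ b ∧ inSub T a b

/-- The increasing forest `inc(T)`: `a ≺ b` iff `a < b` and `a ≺_T b`. -/
def incRel (T : BinTree) (a b : ℕ) : Prop := a < b ∧ bstRel T a b

/-- The decreasing forest `dec(T)`: `b ≺ a` iff `b > a` and `b ≺_T a`. -/
def decRel (T : BinTree) (a b : ℕ) : Prop := b < a ∧ bstRel T a b

/-- The relations of the interval-poset `IP[T,T']`: exactly those of `dec(T)`
together with those of `inc(T')`. -/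
def IPrel (T T' : BinTree) (a b : ℕ) : Prop := decRel T a b ∨ incRel T' a b

end BinTree

open BinTree

/-- `σ` is a linear extension of the strict relation `rel` on `{1,…,n}`: reading the word
`σ(1)…σ(n)` (the `i`-th letter being the label `(σ i : ℕ) + 1`), whenever `rel a b` holds
the letter `a` appears before the letter `b`. -/
def IsLinExt (n : ℕ) (rel : ℕ → ℕ → Prop) (σ : Equiv.Perm (Fin n)) : Prop :=
  ∀ i j : Fin n, rel ((σ i : ℕ) + 1) ((σ j : ℕ) + 1) → i < j

/-- An interval-poset of size `n`: a (strict) poset on `{1,…,n}` such that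
`a ≺ c` implies `b ≺ c` for all `a < b < c`, and `c ≺ a` implies `b ≺ a` for all
`a < b < c`. -/
def IsIntervalPoset (n : ℕ) (rel : ℕ → ℕ → Prop) : Prop :=
  (∀ a b, rel a b → 1 ≤ a ∧ a ≤ n ∧ 1 ≤ b ∧ b ≤ n) ∧
  (∀ a, ¬ rel a a) ∧
  (∀ a b c, rel a b → rel b c → rel a c) ∧
  (∀ a b c, a < b → b < c → rel a c → rel b c) ∧
  (∀ a b c, a < b → b < c → rel c a → rel b a)

/-- `trees(P)` : the number of connected components of the forest formed by the decreasing
relations of `P`, i.e. the number of `k ∈ {1,…,n}` such that there is no `j < k`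
with `k ≺_P j`. -/
noncomputable def treeStat (n : ℕ) (rel : ℕ → ℕ → Prop) : ℕ :=
  Set.ncard {k : ℕ | 1 ≤ k ∧ k ≤ n ∧ ∀ j, j < k → ¬ rel k j}

/-- The composition `𝔹(I1,I2)` of two interval-posets of sizes `k1` and `k2`:
the set of interval-posets `I` of size `k1+k2+1` such that
(i) the relations of `I` among `1,…,k1` are exactly those of `I1`,
(ii) the relations of `I` among `k1+2,…,k1+k2+1` are exactly those of `I2` shifted
by `k1+1`, (iii) `i ≺_I k1+1` for all `i ≤ k1`, and (iv) there is no relation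
`k1+1 ≺_I j` for `j > k1+1`. -/
def Comp (k1 k2 : ℕ) (I1 I2 : ℕ → ℕ → Prop) : Set (ℕ → ℕ → Prop) :=
  {I | IsIntervalPoset (k1 + k2 + 1) I ∧
    (∀ a b, 1 ≤ a → a ≤ k1 → 1 ≤ b → b ≤ k1 → (I a b ↔ I1 a b)) ∧
    (∀ a b, k1 + 2 ≤ a → a ≤ k1 + k2 + 1 → k1 + 2 ≤ b → b ≤ k1 + k2 + 1 →
      (I a b ↔ I2 (a - (k1 + 1)) (b - (k1 + 1)))) ∧
    (∀ i, 1 ≤ i → i ≤ k1 → I i (k1 + 1)) ∧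
    (∀ j, k1 + 1 < j → ¬ I (k1 + 1) j)}

/-- The co-inversions of a permutation `σ` of `{1,…,n}` (written as the word
`σ(1)…σ(n)`): pairs `(σ(i), σ(j))` with `i < j` and `σ(i) > σ(j)`. -/
def coinv (n : ℕ) (σ : Equiv.Perm (Fin n)) : Set (Fin n × Fin n) :=
  {p | ∃ i j : Fin n, i < j ∧ σ j < σ i ∧ p = (σ i, σ j)}

/-!
Every tree above `x(L,R)` in the Tamari order is, in a unique way, `graft j L' R'` with
`L ≤ L'`, `R ≤ R'` and `j ≤ rb(L')`: the tree `x(L',R')` with the top `j` nodes of the right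
border of `L'` rotated above the root. Its right border has `j + rb(R') + 1` nodes, so
`F_T = ∑_{T ≤ T'} x^{rb(T')}` satisfies `F_{x(L,R)} = x F_R ∑_{L ≤ L'} (1 + x + ⋯ + x^{rb(L')})`,
that is `(x - 1) F_{x(L,R)} = x F_R (x F_L - F_L(1))`, the recursion defining `B̃_T`.
-/

namespace BinTree

lemma Rot.size_eq {T T' : BinTree} (h : Rot T T') : T.size = T'.size := by
  induction h with
  | root => simp only [size]; omega
  | left _ _ ih | right _ _ ih => simp only [size, ih]

lemma TamariLE.size_eq {T T' : BinTree} (h : TamariLE T T') : T.size = T'.size := by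
  induction h with
  | refl => rfl
  | tail _ hrot ih => exact ih.trans hrot.size_eq

lemma TamariLE.node_left {l l' : BinTree} (r : BinTree) (h : TamariLE l l') :
    TamariLE (node l r) (node l' r) :=
  h.lift (node · r) fun _ _ => Rot.left r

lemma TamariLE.node_right (l : BinTree) {r r' : BinTree} (h : TamariLE r r') :
    TamariLE (node l r) (node l r') :=
  h.lift (node l) fun _ _ => Rot.right l

lemma tamariLE_leaf_iff {T : BinTree} : TamariLE leaf T ↔ T = leaf := by
  refine ⟨fun h => ?_, fun h => h ▸ Relation.ReflTransGen.refl⟩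
  cases T with
  | leaf => rfl
  | node => have := h.size_eq; simp [size] at this

/-- `graft j l r` is `node l r` after `j` successive root rotations along the right border:
the `j` topmost right-border nodes of `l` move above the root, keeping their left subtrees. -/
def graft : ℕ → BinTree → BinTree → BinTree
  | 0, l, r => node l r
  | _ + 1, leaf, r => node leaf r
  | j + 1, node a b, r => node a (graft j b r)

lemma rightBorder_graft {j : ℕ} {l : BinTree} (r : BinTree) (h : j ≤ l.rightBorder) :
    (graft j l r).rightBorder = j + r.rightBorder + 1 := by
  induction j generalizing l with
  | zero => simp [graft, rightBorder]
  | succ j ih =>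
    cases l with
    | leaf => simp [rightBorder] at h
    | node a b =>
      simp only [rightBorder] at h
      rw [graft, rightBorder, ih (by omega)]
      omega

lemma rot_graft_succ {j : ℕ} {l : BinTree} (r : BinTree) (h : j < l.rightBorder) :
    Rot (graft j l r) (graft (j + 1) l r) := by
  induction j generalizing l with
  | zero =>
    cases l with
    | leaf => simp [rightBorder] at h
    | node a b => exact Rot.root a b r
  | succ j ih =>
    cases l with
    | leaf => simp [rightBorder] at h
    | node a b =>
      simp only [rightBorder] at h
      exact Rot.right a (ih (by omega))

lemma tamariLE_graft {j : ℕ} {l : BinTree} (r : BinTree) (h : j ≤ l.rightBorder) :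
    TamariLE (node l r) (graft j l r) := by
  induction j with
  | zero => exact Relation.ReflTransGen.refl
  | succ j ih => exact (ih (by omega)).tail (rot_graft_succ r (by omega))

lemma Rot.exists_graft {j : ℕ} {l r T' : BinTree} (hj : j ≤ l.rightBorder)
    (h : Rot (graft j l r) T') :
    ∃ j' l' r', j' ≤ l'.rightBorder ∧ T' = graft j' l' r' ∧
      TamariLE l l' ∧ TamariLE r r' := by
  induction j generalizing l T' with
  | zero =>
    cases h with
    | root A B _ =>
      exact ⟨1, node A B, r, by simp [rightBorder], rfl, .refl, .refl⟩
    | left _ h => exact ⟨0, _, r, Nat.zero_le _, rfl, .single h, .refl⟩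
    | right _ h => exact ⟨0, l, _, Nat.zero_le _, rfl, .refl, .single h⟩
  | succ j ih =>
    cases l with
    | leaf => simp [rightBorder] at hj
    | node a b =>
      simp only [rightBorder] at hj
      cases h with
      | root A B C =>
        exact ⟨j + 2, node A (node B b), r, by simp [rightBorder]; omega, rfl,
          .single (Rot.root A B b), .refl⟩
      | left _ h =>
        exact ⟨j + 1, node _ b, r, by simp [rightBorder]; omega, rfl, .single (Rot.left b h), .refl⟩
      | right _ h =>
        obtain ⟨j', b', r', hj', rfl, hb, hr⟩ := ih (by omega) h
        exact ⟨j' + 1, node a b', r', by simp [rightBorder]; omega, rfl,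
          TamariLE.node_right a hb, hr⟩

lemma tamariLE_node_iff {l r T' : BinTree} :
    TamariLE (node l r) T' ↔
      ∃ j l' r', j ≤ l'.rightBorder ∧ T' = graft j l' r' ∧ TamariLE l l' ∧ TamariLE r r' := by
  constructor
  · intro h
    induction h with
    | refl => exact ⟨0, l, r, Nat.zero_le _, rfl, .refl, .refl⟩
    | tail _ hrot ih =>
      obtain ⟨j, l', r', hj, rfl, hl, hr⟩ := ih
      obtain ⟨j', l'', r'', hj', rfl, hl', hr'⟩ := hrot.exists_graft hj
      exact ⟨j', l'', r'', hj', rfl, hl.trans hl', hr.trans hr'⟩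
  · rintro ⟨j, l', r', hj, rfl, hl, hr⟩
    exact ((hl.node_left r).trans (hr.node_right l')).trans (tamariLE_graft r' hj)

lemma graft_inj : ∀ {j₁ j₂ : ℕ} {l₁ l₂ r₁ r₂ : BinTree}, j₁ ≤ l₁.rightBorder →
    j₂ ≤ l₂.rightBorder → l₁.size = l₂.size → graft j₁ l₁ r₁ = graft j₂ l₂ r₂ →
    j₁ = j₂ ∧ l₁ = l₂ ∧ r₁ = r₂
  | 0, 0, _, _, _, _, _, _, _, h => by cases h; simp
  | 0, _ + 1, _, node _ _, _, _, _, _, hs, h => by cases h; simp only [size] at hs; omega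
  | _ + 1, 0, node _ _, _, _, _, _, _, hs, h => by cases h; simp only [size] at hs; omega
  | _ + 1, _ + 1, node _ _, node _ _, _, _, h₁, h₂, hs, h => by
    simp only [graft, node.injEq] at h
    obtain ⟨rfl, h⟩ := h
    simp only [rightBorder, size] at h₁ h₂ hs
    obtain ⟨rfl, rfl, rfl⟩ := graft_inj (by omega) (by omega) (by omega) h
    simp
  | _ + 1, _, leaf, _, _, _, h₁, _, _, _ => by simp [rightBorder] at h₁
  | _, _ + 1, _, leaf, _, _, _, h₂, _, _ => by simp [rightBorder] at h₂

lemma finite_setOf_tamariLE (T : BinTree) : {T' | TamariLE T T'}.Finite := by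
  induction T with
  | leaf => simp only [tamariLE_leaf_iff, Set.ofPred_eq_eq_singleton, Set.finite_singleton]
  | node l r ihl ihr =>
    refine (ihl.biUnion fun l' _ => ihr.biUnion fun r' _ =>
      (Set.finite_Iic l'.rightBorder).image fun j => graft j l' r').subset ?_
    intro T' h
    obtain ⟨j, l', r', hj, rfl, hl, hr⟩ := tamariLE_node_iff.1 h
    exact Set.mem_biUnion hl (Set.mem_biUnion hr ⟨j, hj, rfl⟩)

open Finset
open scoped Classical

noncomputable def upperIdeal (T : BinTree) : Finset BinTree := (finite_setOf_tamariLE T).toFinset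

@[simp]
lemma mem_upperIdeal {T T' : BinTree} : T' ∈ T.upperIdeal ↔ TamariLE T T' :=
  Set.Finite.mem_toFinset _

lemma upperIdeal_node (l r : BinTree) :
    (node l r).upperIdeal = ((l.upperIdeal ×ˢ r.upperIdeal).sigma
      fun p => range (p.1.rightBorder + 1)).image fun x => graft x.2 x.1.1 x.1.2 := by
  ext T'
  simp only [mem_upperIdeal, tamariLE_node_iff, mem_image, mem_sigma, mem_product, mem_range,
    Nat.lt_succ_iff, Sigma.exists, Prod.exists]
  constructor
  · rintro ⟨j, l', r', hj, rfl, hl, hr⟩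
    exact ⟨l', r', j, ⟨⟨hl, hr⟩, hj⟩, rfl⟩
  · rintro ⟨l', r', j, ⟨⟨hl, hr⟩, hj⟩, rfl⟩
    exact ⟨j, l', r', hj, rfl, hl, hr⟩

lemma injOn_graft (l r : BinTree) :
    Set.InjOn (fun x : (_ : BinTree × BinTree) × ℕ => graft x.2 x.1.1 x.1.2)
      ((l.upperIdeal ×ˢ r.upperIdeal).sigma fun p => range (p.1.rightBorder + 1)) := by
  rintro ⟨⟨l₁, r₁⟩, j₁⟩ h₁ ⟨⟨l₂, r₂⟩, j₂⟩ h₂ h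
  simp only [coe_sigma, Set.mem_sigma_iff, coe_product, Set.mem_prod, mem_coe, mem_upperIdeal,
    mem_range, Nat.lt_succ_iff] at h₁ h₂
  obtain ⟨rfl, rfl, rfl⟩ :=
    graft_inj h₁.2 h₂.2 (h₁.1.1.size_eq.symm.trans h₂.1.1.size_eq) h
  rfl

noncomputable def rightBorderPoly (T : BinTree) : ℤ[X] :=
  ∑ T' ∈ T.upperIdeal, X ^ T'.rightBorder

lemma coeff_rightBorderPoly (T : BinTree) (k : ℕ) :
    (rightBorderPoly T).coeff k = #{T' ∈ T.upperIdeal | T'.rightBorder = k} := by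
  simp [rightBorderPoly, coeff_X_pow, sum_boole, eq_comm]

lemma eval_one_rightBorderPoly (T : BinTree) : (rightBorderPoly T).eval 1 = #T.upperIdeal := by
  simp [rightBorderPoly, eval_finsetSum]

lemma rightBorderPoly_leaf : rightBorderPoly leaf = 1 := by
  have : leaf.upperIdeal = {leaf} := by ext; simp [tamariLE_leaf_iff]
  simp [rightBorderPoly, this, rightBorder]

lemma rightBorderPoly_node (l r : BinTree) :
    rightBorderPoly (node l r) =
      X * rightBorderPoly r * ∑ l' ∈ l.upperIdeal, ∑ j ∈ range (l'.rightBorder + 1), X ^ j := by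
  rw [rightBorderPoly, upperIdeal_node, sum_image (injOn_graft l r), sum_sigma, sum_product,
    rightBorderPoly, mul_sum]
  refine sum_congr rfl fun l' _ => ?_
  simp_rw [mul_sum, sum_mul]
  rw [sum_comm]
  refine sum_congr rfl fun j hj => sum_congr rfl fun r' _ => ?_
  rw [rightBorder_graft r' (Nat.lt_succ_iff.1 (mem_range.1 hj))]
  ring

lemma X_sub_one_mul_rightBorderPoly_node (l r : BinTree) :
    (X - C 1) * rightBorderPoly (node l r) =
      X * rightBorderPoly r * (X * rightBorderPoly l - C ((rightBorderPoly l).eval 1)) := by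
  have geom : (X - C 1) * ∑ l' ∈ l.upperIdeal, ∑ j ∈ range (l'.rightBorder + 1), (X : ℤ[X]) ^ j =
      X * rightBorderPoly l - C ((rightBorderPoly l).eval 1) := by
    rw [mul_sum, eval_one_rightBorderPoly, rightBorderPoly, mul_sum, C_1]
    simp only [mul_geom_sum, pow_succ', sum_sub_distrib, sum_const, nsmul_one, map_natCast]
  rw [rightBorderPoly_node, ← geom]
  ring

lemma tamPolyMirror_eq_rightBorderPoly (T : BinTree) : tamPolyMirror T = rightBorderPoly T := by
  induction T with
  | leaf => rw [tamPolyMirror, rightBorderPoly_leaf]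
  | node l r ihl ihr =>
    rw [tamPolyMirror, ihl, ihr, ← X_sub_one_mul_rightBorderPoly_node,
      mul_divByMonic_cancel_left _ (monic_X_sub_C 1)]

end BinTree

/-- For a binary tree `T` of size `n`, the coefficient of `x^k` in the mirror
Tamari polynomial `B̃_T` equals the number of binary trees `T'` of size `n` with `T ≤ T'`
in the Tamari order whose right border has exactly `k` nodes; in particular `B̃_T(1)` is
the number of trees greater than or equal to `T`. -/
theorem tamPolyMirror_counts (T : BinTree) :
    (∀ k : ℕ, (tamPolyMirror T).coeff k =
      (Nat.card {T' : BinTree // T'.size = T.size ∧ TamariLE T T' ∧ T'.rightBorder = k} : ℤ)) ∧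
    (tamPolyMirror T).eval 1 =
      (Nat.card {T' : BinTree // T'.size = T.size ∧ TamariLE T T'} : ℤ) := by
  have above_iff : ∀ T', T'.size = T.size ∧ TamariLE T T' ↔ T' ∈ T.upperIdeal := fun T' => by
    rw [mem_upperIdeal, and_iff_right_iff_imp]
    exact fun h => h.size_eq.symm
  rw [tamPolyMirror_eq_rightBorderPoly]
  refine ⟨fun k => ?_, ?_⟩
  · rw [coeff_rightBorderPoly, ← Nat.card_eq_finsetCard]
    congr 1
    exact Nat.card_congr (Equiv.subtypeEquivRight fun T' => by
      rw [Finset.mem_filter, ← above_iff, and_assoc])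
  · rw [eval_one_rightBorderPoly, ← Nat.card_eq_finsetCard]
    exact congrArg _ (Nat.card_congr (Equiv.subtypeEquivRight fun T' => (above_iff T').symm))
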